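/- Let M be a simple U(L)-module that is free of rank 1 over U(B) with basis v, where B = ℂL₀⊕ℂa₀. Writing c_n v = C_n(L₀,a₀)v and b_n v = B_n(L₀,a₀)v, the polynomial C_n is a constant (lies in ℂ) for every n ∈ ℤ; moreover C_n = λ^n C₀ for some λ ∈ ℂ*, and if C₀ = 0 then M is not simple (a contradiction), so C₀ ≠ 0. -/

import Mathlib

noncomputable section

/-- `p(L₀, a₀) v` for `p ∈ ℂ[u₀,u₁] ≅ U(B)`. -/
noncomputable def evUB {M : Type*} [AddCommGroup M] [Module ℂ M]
    (L0 A0 : Module.End ℂ M) (p : MvPolynomial (Fin 2) ℂ) (v : M) : M :=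
  ∑ mo ∈ p.support, p.coeff mo • ((L0 ^ (mo 0)) ((A0 ^ (mo 1)) v))

/-!
Identify `U(B) ≅ ℂ[L₀, a₀]` with `ℂ[X][X]`, the inner variable standing for `L₀` and the outer one
for `a₀`, and transport every vector `x_n v` to its symbol `X_n` through the freeness of `M`.
Since `[L₀, x_n] = n x_n` and `[x_n, a₀] ∈ {0, -c_n, a_n}`, each generator acts on `p(L₀, a₀) v`
by the differential operator `p ↦ p(L₀ - n, a₀) X_n + ∂_{a₀} p(L₀ - n, a₀) S_n`, so each bracket
applied to `v` becomes a polynomial identity between symbols. The identity from `[d₀, a_n] = a_n`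
is an Euler equation in `a₀`: it forces `A_n = α_n(L₀) a₀` and makes the symbol of `d₀` invariant
under `L₀ ↦ L₀ - n`. Then `[d₀, c_n] = 0` makes `C_n` free of `a₀`, `[a_m, b₀] = c_m` gives
`C_m = α_m C₀`, `[a_k, c₀] = 0` makes `C₀` periodic in `L₀`, hence constant, and `[a_m, a_n] = 0`
forces every `α_n` to be constant, by comparing sums of roots. Finally `[d_m, a_n] = a_{m+n}`
makes `n ↦ α_n` multiplicative, so `α_n = λ^n`. If `C₀ = 0`, all `c_n` vanish and `a₀ U(B) v` is
a nonzero proper submodule.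
-/

open Polynomial

theorem sum_roots_taylor (p : ℂ[X]) (r : ℂ) :
    (taylor r p).roots.sum + p.natDegree * r = p.roots.sum := by
  conv_rhs => rw [← map_roots_comp_C_mul_X_add_C p 1 r isUnit_one]
  simp [← taylor_apply, Multiset.sum_map_add, IsAlgClosed.card_roots_eq_natDegree, natDegree_taylor]

theorem natDegree_eq_zero_of_taylor_eq {q : ℂ[X]} {r : ℂ} (hr : r ≠ 0) (h : taylor r q = q) :
    q.natDegree = 0 := by
  have hsum := sum_roots_taylor q r
  rw [h, add_eq_left, mul_eq_zero] at hsum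
  exact_mod_cast hsum.resolve_right hr

theorem natDegree_eq_zero_of_taylor_mul_comm {γ : ℤ → ℂ[X]} (hγ : ∀ n, γ n ≠ 0)
    (h : ∀ m n : ℤ, taylor (-(m : ℂ)) (γ n) * γ m = taylor (-(n : ℂ)) (γ m) * γ n) (n : ℤ) :
    (γ n).natDegree = 0 := by
  have hdeg : ∀ m n : ℤ, ((γ n).natDegree : ℂ) * m = (γ m).natDegree * n := by
    intro m n
    have hsum := congrArg (fun p => p.roots.sum) (h m n)
    simp only [roots_mul (mul_ne_zero ((taylor_eq_zero _ _).not.mpr (hγ _)) (hγ _)),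
      Multiset.sum_add] at hsum
    linear_combination hsum - sum_roots_taylor (γ n) (-m) + sum_roots_taylor (γ m) (-n)
  have h1 : (γ 1).natDegree = 0 := by
    have : (((γ (-1)).natDegree + (γ 1).natDegree : ℕ) : ℂ) = 0 := by
      push_cast; linear_combination hdeg 1 (-1)
    exact (Nat.add_eq_zero_iff.mp (by exact_mod_cast this)).2
  have : ((γ n).natDegree : ℂ) = 0 := by
    linear_combination hdeg 1 n + n * (by exact_mod_cast h1 : ((γ 1).natDegree : ℂ) = 0)
  exact_mod_cast this

section Euler

variable {S : Type*} [CommRing S] [IsDomain S] [CharZero S] {A g : S[X]}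

theorem natDegree_eq_zero_of_mul_eq_X_mul_derivative (hA : A ≠ 0)
    (h : A * g = X * derivative A) : g.natDegree = 0 := by
  by_cases hg : g = 0
  · simp [hg]
  have hA' : A.natDegree ≠ 0 := fun h0 => by
    rw [derivative_of_natDegree_zero h0, mul_zero] at h
    exact mul_ne_zero hA hg h
  have hd : derivative A ≠ 0 := fun h0 => hA' (derivative_eq_zero.mp h0)
  have := natDegree_mul hA hg
  rw [h, natDegree_X_mul hd] at this
  have := natDegree_derivative_lt hA'
  omega

theorem eq_C_mul_X_pow_of_mul_eq_X_mul_derivative (hA : A ≠ 0)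
    (h : A * g = X * derivative A) :
    A = C A.leadingCoeff * X ^ A.natDegree ∧ g = A.natDegree := by
  obtain ⟨c, rfl⟩ : ∃ c, g = C c :=
    ⟨_, eq_C_of_natDegree_eq_zero (natDegree_eq_zero_of_mul_eq_X_mul_derivative hA h)⟩
  have hcoeff : ∀ j : ℕ, A.coeff j * c = j * A.coeff j := by
    intro j
    have hj := congrArg (coeff · j) h
    rcases j with _ | j
    · simpa using hj
    · simpa [coeff_derivative, mul_comm] using hj
  have hc : c = A.natDegree := mul_left_cancel₀ (leadingCoeff_ne_zero.mpr hA) <| by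
    rw [leadingCoeff]; linear_combination hcoeff A.natDegree
  refine ⟨?_, by rw [hc, map_natCast]⟩
  ext j
  rw [coeff_C_mul_X_pow]
  split_ifs with hj
  · rw [hj, leadingCoeff]
  · by_contra hne
    refine hj (Nat.cast_injective (R := S) ?_)
    rw [← hc]
    exact mul_left_cancel₀ hne (by linear_combination -hcoeff j)

end Euler

theorem eq_one_of_sub_one_eq_mul (f : ℤ → ℕ) (h : ∀ n : ℤ, (f n : ℤ) - 1 = n * ((f 1 : ℤ) - 1))
    (n : ℤ) : f n = 1 := by
  have h2 := h 2
  have hm2 := h (-2)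
  have hf1 : (f 1 : ℤ) = 1 := by omega
  have := h n
  rw [hf1, sub_self, mul_zero] at this
  omega

theorem eq_zpow_of_add_eq_mul_add {α s : ℤ → ℂ} (hα : ∀ n, α n ≠ 0)
    (h : ∀ m n : ℤ, α (m + n) = α n * α m + n * α n * s m) (n : ℤ) : α n = α 1 ^ n := by
  -- expand `α (m + n + k)` in two ways
  have hassoc : ∀ m n k : ℤ, (α n + k * s n) * (α m + (n + k) * s m)
      = α n * α m + n * α n * s m + k * s (m + n) := by
    intro m n k
    refine mul_left_cancel₀ (hα k) ?_
    have e1 := h m (n + k)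
    have e2 := h (m + n) k
    have e3 := h n k
    have e4 := h m n
    rw [← add_assoc] at e1
    push_cast at e1 e2 e3 e4 ⊢
    linear_combination -((α m + (n + k) * s m) * e3 + e1 - e2 - α k * e4)
  have hs : ∀ n, s n = 0 := fun n =>
    mul_self_eq_zero.mp (by linear_combination (hassoc n n 2) / 2 - hassoc n n 1)
  have hmul : ∀ m n : ℤ, α (m + n) = α m * α n := fun m n => by
    rw [h, hs]; ring
  have h0 : α 0 = 1 := by
    simpa [hα 0] using hmul 0 0
  induction n using Int.induction_on with
  | zero => rw [h0, zpow_zero]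
  | succ k ih => rw [hmul, ih, zpow_add_one₀ (hα 1)]
  | pred k ih =>
    rw [zpow_sub_one₀ (hα 1), ← ih, eq_mul_inv_iff_mul_eq₀ (hα 1), ← hmul]
    ring_nf

/-- `p(L₀, a₀) ↦ p(L₀ - z, a₀)`. -/
def shift (z : ℂ) : ℂ[X][X] →ₐ[ℂ] ℂ[X][X] := mapAlgHom (taylorAlgHom (-z))

@[simp] theorem shift_C (z : ℂ) (q : ℂ[X]) : shift z (C q) = C (taylor (-z) q) := by
  simp [shift]

@[simp] theorem shift_X (z : ℂ) : shift z X = X := by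
  simp [shift]

theorem shift_C_X (z : ℂ) : shift z (C X) = C X - C (C z) := by
  simp [sub_eq_add_neg]

@[simp] theorem shift_zero (p : ℂ[X][X]) : shift 0 p = p := by
  conv_rhs => rw [← map_id (p := p)]
  simp only [shift, coe_mapAlgHom]
  congr 1
  exact RingHom.ext fun q => by simp

theorem shift_shift (a b : ℂ) (p : ℂ[X][X]) : shift a (shift b p) = shift (a + b) p := by
  simp only [shift, coe_mapAlgHom, map_map]
  congr 1
  exact RingHom.ext fun q => by simp [taylor_taylor, add_comm]

theorem derivative_shift (z : ℂ) (p : ℂ[X][X]) :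
    derivative (shift z p) = shift z (derivative p) := by
  simp [shift, derivative_map]

/-- `ℂ[u₀, u₁] ≃ ℂ[X][X]`, sending `u₀ ↦ C X` (for `L₀`) and `u₁ ↦ X` (for `a₀`). -/
def iterEquiv : MvPolynomial (Fin 2) ℂ ≃ₐ[ℂ] ℂ[X][X] :=
  (MvPolynomial.renameEquiv ℂ finSuccEquivLast).trans <|
    (MvPolynomial.optionEquivLeft ℂ (Fin 1)).trans <|
      mapAlgEquiv (MvPolynomial.uniqueAlgEquiv ℂ (Fin 1))

theorem iterEquiv_X_zero : iterEquiv (MvPolynomial.X 0) = C X := by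
  simp [iterEquiv, show (finSuccEquivLast : Fin 2 ≃ Option (Fin 1)) 0 = some 0 from rfl]

theorem iterEquiv_X_one : iterEquiv (MvPolynomial.X 1) = X := by
  simp [iterEquiv, show (finSuccEquivLast : Fin 2 ≃ Option (Fin 1)) 1 = none from rfl]

theorem iterEquiv_C (c : ℂ) : iterEquiv (MvPolynomial.C c) = C (C c) :=
  iterEquiv.commutes c

theorem algebraMap_C_C (c : ℂ) : algebraMap ℂ ℂ[X][X] c = C (C c) := rfl

theorem induction_on_C_X_mul {P : ℂ[X][X] → Prop} (C_C : ∀ c, P (C (C c)))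
    (add : ∀ p q, P p → P q → P (p + q)) (X_mul : ∀ p, P p → P (X * p))
    (C_X_mul : ∀ p, P p → P (C X * p)) (p : ℂ[X][X]) : P p := by
  induction p using Polynomial.induction_on with
  | C q =>
    induction q using Polynomial.induction_on with
    | C c => exact C_C c
    | add q r hq hr => rw [C_add]; exact add _ _ hq hr
    | monomial n c ih => rw [pow_succ, ← mul_assoc, C_mul, mul_comm]; exact C_X_mul _ ih
  | add p q hp hq => exact add _ _ hp hq
  | monomial n q ih => rw [pow_succ, ← mul_assoc, mul_comm]; exact X_mul _ ih

theorem eq_mul_of_shift_sub_self_eq {D : ℂ[X][X]} {c : ℤ → ℂ}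
    (h : ∀ n : ℤ, shift n D - D = C (C (c n))) (n : ℤ) : c n = n * c 1 := by
  have hadd : ∀ m n : ℤ, c (m + n) = c m + c n := by
    intro m n
    have hmn : shift ((m + n : ℤ) : ℂ) D - D = shift m (shift n D - D) + (shift m D - D) := by
      rw [map_sub, shift_shift]; push_cast; ring
    rw [h, h, h, shift_C, taylor_C, ← map_add, ← map_add] at hmn
    rw [C_injective (C_injective hmn), add_comm]
  simpa using AddMonoidHom.apply_int ℂ (AddMonoidHom.mk' c hadd) n

section Action

variable {M : Type*} [AddCommGroup M] [Module ℂ M]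

def evUBLinear (L0 A0 : Module.End ℂ M) (v : M) :
    MvPolynomial (Fin 2) ℂ →ₗ[ℂ] M :=
  Finsupp.linearCombination ℂ (fun mo : Fin 2 →₀ ℕ => (L0 ^ mo 0) ((A0 ^ mo 1) v)) ∘ₗ
    (AddMonoidAlgebra.coeffLinearEquiv ℂ).toLinearMap

variable {L0 A0 : Module.End ℂ M} {v : M}

theorem evUBLinear_apply (p : MvPolynomial (Fin 2) ℂ) : evUBLinear L0 A0 v p = evUB L0 A0 p v :=
  rfl

theorem evUBLinear_monomial (mo : Fin 2 →₀ ℕ) (c : ℂ) :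
    evUBLinear L0 A0 v (MvPolynomial.monomial mo c) = c • (L0 ^ mo 0) ((A0 ^ mo 1) v) :=
  Finsupp.linearCombination_single ℂ c mo

theorem evUBLinear_X_zero_mul (p : MvPolynomial (Fin 2) ℂ) :
    evUBLinear L0 A0 v (MvPolynomial.X 0 * p) = L0 (evUBLinear L0 A0 v p) := by
  induction p using MvPolynomial.induction_on' with
  | monomial mo c =>
    simp [MvPolynomial.X, MvPolynomial.monomial_mul, evUBLinear_monomial, pow_add]
  | add p q hp hq => simp [mul_add, hp, hq]

theorem evUBLinear_X_one_mul (hLA : Commute L0 A0) (p : MvPolynomial (Fin 2) ℂ) :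
    evUBLinear L0 A0 v (MvPolynomial.X 1 * p) = A0 (evUBLinear L0 A0 v p) := by
  induction p using MvPolynomial.induction_on' with
  | monomial mo c =>
    simp [MvPolynomial.X, MvPolynomial.monomial_mul, evUBLinear_monomial, pow_add,
      ← Module.End.mul_apply, ← mul_assoc, (hLA.pow_left (mo 0)).eq]
  | add p q hp hq => simp [mul_add, hp, hq]

def ofSymbol (L0 A0 : Module.End ℂ M) (v : M) : ℂ[X][X] →ₗ[ℂ] M :=
  evUBLinear L0 A0 v ∘ₗ iterEquiv.symm.toLinearMap

theorem ofSymbol_one : ofSymbol L0 A0 v 1 = v := by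
  simp [ofSymbol, evUBLinear_apply, evUB]

theorem ofSymbol_iterEquiv (p : MvPolynomial (Fin 2) ℂ) :
    ofSymbol L0 A0 v (iterEquiv p) = evUB L0 A0 p v := by
  simp [ofSymbol, evUBLinear_apply]

theorem ofSymbol_X : ofSymbol L0 A0 v X = A0 v := by
  simp [ofSymbol, ← iterEquiv_X_one, MvPolynomial.X, evUBLinear_monomial]

theorem ofSymbol_C_X_mul (p : ℂ[X][X]) :
    ofSymbol L0 A0 v (C X * p) = L0 (ofSymbol L0 A0 v p) := by
  simp [ofSymbol, ← iterEquiv_X_zero, evUBLinear_X_zero_mul]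

theorem ofSymbol_X_mul (hLA : Commute L0 A0) (p : ℂ[X][X]) :
    ofSymbol L0 A0 v (X * p) = A0 (ofSymbol L0 A0 v p) := by
  simp [ofSymbol, ← iterEquiv_X_one, evUBLinear_X_one_mul hLA]

/-- `T (p(L₀, a₀) v) = p(L₀ - z, a₀) t + ∂_{a₀} p(L₀ - z, a₀) s`; for instance `b_n` acts with
`t = B_n` and `s = -C_n`. -/
def ActsBy (Φ : ℂ[X][X] →ₗ[ℂ] M) (T : Module.End ℂ M) (z : ℂ) (t s : ℂ[X][X]) : Prop :=
  ∀ p, T (Φ p) = Φ (shift z p * t + derivative (shift z p) * s)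

namespace ActsBy

variable {Φ : ℂ[X][X] →ₗ[ℂ] M} {T : Module.End ℂ M} {z : ℂ} {t s : ℂ[X][X]}

theorem zero : ActsBy Φ 0 z 0 0 := fun p => by simp

theorem neg (h : ActsBy Φ T z t 0) : ActsBy Φ (-T) z (-t) 0 := fun p => by
  rw [LinearMap.neg_apply, h p, ← map_neg]
  exact congrArg Φ (by ring)

theorem apply_one (h : ActsBy Φ T z t s) : T (Φ 1) = Φ t := by
  simpa using h 1

theorem of_commutator {L A S : Module.End ℂ M} (hX : ∀ p, Φ (X * p) = A (Φ p))
    (hCX : ∀ p, Φ (C X * p) = L (Φ p)) (hS : ActsBy Φ S z s 0)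
    (hTL : L * T - T * L = z • T) (hTA : T * A - A * T = S) (ht : T (Φ 1) = Φ t) :
    ActsBy Φ T z t s := by
  have hTL' : ∀ x, T (L x) = L (T x) - z • T x := fun x => by
    rw [← LinearMap.smul_apply, ← hTL]; simp
  have hTA' : ∀ x, T (A x) = A (T x) + S x := fun x => by
    rw [← hTA]; simp
  intro p
  induction p using induction_on_C_X_mul with
  | C_C c =>
    have hc : C (C c) = c • (1 : ℂ[X][X]) := by rw [Algebra.smul_def, mul_one, algebraMap_C_C]
    rw [hc, map_smul, map_smul, ht, map_smul, map_one, derivative_smul, derivative_one, ← map_smul]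
    exact congrArg Φ (by simp)
  | add p q hp hq =>
    rw [map_add, map_add, hp, hq, map_add (shift z), derivative_add, ← map_add]
    exact congrArg Φ (by ring)
  | X_mul p hp =>
    rw [hX, hTA', hp, hS p, ← hX, ← map_add, map_mul, shift_X, derivative_mul, derivative_X]
    exact congrArg Φ (by ring)
  | C_X_mul p hp =>
    rw [hCX, hTL', hp, ← hCX, ← map_smul, ← map_sub, map_mul, shift_C_X, derivative_mul,
      derivative_sub, derivative_C, derivative_C, Algebra.smul_def]
    exact congrArg Φ (by rw [algebraMap_C_C]; ring)

theorem commutator (hΦ : Function.Injective Φ) {T₁ T₂ T₃ : Module.End ℂ M} {z₁ z₂ : ℂ}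
    {t₁ s₁ t₂ s₂ t₃ : ℂ[X][X]} (h₁ : ActsBy Φ T₁ z₁ t₁ s₁) (h₂ : ActsBy Φ T₂ z₂ t₂ s₂)
    (h₃ : T₃ (Φ 1) = Φ t₃) (h : T₁ * T₂ - T₂ * T₁ = T₃) :
    shift z₁ t₂ * t₁ + derivative (shift z₁ t₂) * s₁
      = shift z₂ t₁ * t₂ + derivative (shift z₂ t₁) * s₂ + t₃ := by
  apply hΦ
  have h1 := LinearMap.congr_fun h (Φ 1)
  simp only [LinearMap.sub_apply, Module.End.mul_apply, h₁.apply_one, h₂.apply_one, h₁ t₂,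
    h₂ t₁, h₃] at h1
  rw [map_add _ _ t₃, ← h1, add_sub_cancel]

end ActsBy

def multiplesOfX (Φ : ℂ[X][X] →ₗ[ℂ] M) : Submodule ℂ M :=
  ((Ideal.span {(X : ℂ[X][X])}).restrictScalars ℂ).map Φ

variable {Φ : ℂ[X][X] →ₗ[ℂ] M}

theorem mem_multiplesOfX {x : M} : x ∈ multiplesOfX Φ ↔ ∃ q, Φ (X * q) = x := by
  simp [multiplesOfX, Ideal.mem_span_singleton', mul_comm]

theorem ActsBy.mem_multiplesOfX {T : Module.End ℂ M} {z : ℂ} {t s : ℂ[X][X]}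
    (h : ActsBy Φ T z t s) (hs : X ∣ s) {x : M} (hx : x ∈ multiplesOfX Φ) :
    T x ∈ multiplesOfX Φ := by
  obtain ⟨q, rfl⟩ := _root_.mem_multiplesOfX.mp hx
  obtain ⟨r, rfl⟩ := hs
  rw [_root_.mem_multiplesOfX, h]
  exact ⟨shift z q * t + (shift z q + X * derivative (shift z q)) * r,
    congrArg Φ (by rw [map_mul, shift_X, derivative_mul, derivative_X]; ring)⟩

theorem multiplesOfX_ne_bot (hΦ : Function.Injective Φ) : multiplesOfX Φ ≠ ⊥ := by
  intro h
  have hX : Φ (X * 1) ∈ multiplesOfX Φ := mem_multiplesOfX.mpr ⟨1, rfl⟩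
  rw [h, Submodule.mem_bot, ← map_zero Φ] at hX
  exact X_ne_zero (R := ℂ[X]) (by simpa using hΦ hX)

theorem multiplesOfX_ne_top (hΦ : Function.Injective Φ) : multiplesOfX Φ ≠ ⊤ := by
  intro h
  obtain ⟨q, hq⟩ := mem_multiplesOfX.mp (h ▸ Submodule.mem_top : Φ 1 ∈ multiplesOfX Φ)
  simpa using congrArg (coeff · 0) (hΦ hq)

end Action

/-- The symbols of `[d_m, a_n] = a_{m+n}`, `[a_m, a_n] = 0`, `[a_k, c₀] = 0`, `[d₀, c_n] = 0` and
`[a_m, b₀] = c_m` applied to `v`. -/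
structure SymbolRelations (a b c d : ℤ → ℂ[X][X]) : Prop where
  a_zero : a 0 = X
  d_a : ∀ m n : ℤ, shift m (a n) * d m + derivative (shift m (a n)) * a m
    = shift n (d m) * a n + a (m + n)
  a_a : ∀ m n : ℤ, shift m (a n) * a m = shift n (a m) * a n
  a_c : ∀ k : ℤ, shift k (c 0) * a k = a k * c 0
  d_c : ∀ n : ℤ, c n * d 0 + derivative (c n) * X = shift n (d 0) * c n
  a_b : ∀ m : ℤ, shift m (b 0) * a m = a m * b 0 - derivative (a m) * c 0 + c m

namespace SymbolRelations

variable {a b c d : ℤ → ℂ[X][X]}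

theorem a_ne_zero (h : SymbolRelations a b c d) (n : ℤ) : a n ≠ 0 := by
  intro hn
  have h0 := h.d_a (-n) n
  rw [hn, neg_add_cancel, h.a_zero] at h0
  exact X_ne_zero (R := ℂ[X]) (by simpa using h0.symm)

theorem exists_a_eq_C_mul_X (h : SymbolRelations a b c d) :
    ∃ α : ℤ → ℂ[X], (∀ n, α n ≠ 0 ∧ a n = C (α n) * X) ∧ ∀ n : ℤ, shift n (d 0) = d 0 := by
  have heuler : ∀ n : ℤ, a n * (shift n (d 0) - d 0 + 1) = X * derivative (a n) := fun n => by
    have h0 := h.d_a 0 n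
    simp only [Int.cast_zero, shift_zero, zero_add, h.a_zero] at h0
    linear_combination -h0
  choose ha hdeg using fun n => eq_C_mul_X_pow_of_mul_eq_X_mul_derivative (h.a_ne_zero n) (heuler n)
  have hshift : ∀ n : ℤ, shift n (d 0) - d 0 = C (C (((a n).natDegree : ℂ) - 1)) := fun n => by
    rw [eq_sub_of_add_eq (hdeg n)]; simp
  have hone : ∀ n, (a n).natDegree = 1 := eq_one_of_sub_one_eq_mul _ fun n => by
    exact_mod_cast eq_mul_of_shift_sub_self_eq hshift n
  refine ⟨fun n => (a n).leadingCoeff, fun n => ⟨leadingCoeff_ne_zero.mpr (h.a_ne_zero n), ?_⟩,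
    fun n => ?_⟩
  · rw [← pow_one X, ← hone n]; exact ha n
  · exact sub_eq_zero.mp (by simpa [hone n] using hshift n)

theorem exists_c_eq (h : SymbolRelations a b c d) {α : ℤ → ℂ[X]}
    (hα : ∀ n, α n ≠ 0 ∧ a n = C (α n) * X) (hd : ∀ n : ℤ, shift n (d 0) = d 0) :
    ∃ γ : ℂ, ∀ n, c n = C (α n * C γ) := by
  have hc : ∀ n, c n = C ((c n).coeff 0) := fun n => by
    have h0 : derivative (c n) * X = 0 := by linear_combination h.d_c n + c n * hd n
    exact eq_C_of_natDegree_eq_zero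
      (derivative_eq_zero.mp ((mul_eq_zero.mp h0).resolve_right X_ne_zero))
  have hcm : ∀ m, (c m).coeff 0 = α m * (c 0).coeff 0 := fun m => by
    have h0 := congrArg (coeff · 0) (h.a_b m)
    rw [(hα m).2, hc 0, hc m] at h0
    simp [derivative_mul] at h0
    linear_combination -h0
  have hper : taylor (-1) ((c 0).coeff 0) = (c 0).coeff 0 := by
    have h0 := h.a_c 1
    rw [(hα 1).2, hc 0] at h0
    rw [shift_C] at h0
    have h1 : C (taylor (-1) ((c 0).coeff 0) * α 1) * X = C ((c 0).coeff 0 * α 1) * X := by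
      rw [C_mul, C_mul]
      push_cast at h0
      linear_combination h0
    exact mul_right_cancel₀ (hα 1).1 (C_injective (mul_right_cancel₀ X_ne_zero h1))
  refine ⟨((c 0).coeff 0).coeff 0, fun n => ?_⟩
  rw [hc n, hcm n, ← eq_C_of_natDegree_eq_zero (natDegree_eq_zero_of_taylor_eq (by norm_num) hper)]

theorem eq_C_of_a_eq_C_mul_X (h : SymbolRelations a b c d) {α : ℤ → ℂ[X]}
    (hα : ∀ n, α n ≠ 0 ∧ a n = C (α n) * X) (n : ℤ) : α n = C ((α n).coeff 0) := by
  refine eq_C_of_natDegree_eq_zero (natDegree_eq_zero_of_taylor_mul_comm (fun n => (hα n).1)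
    (fun m n => ?_) n)
  have h0 := h.a_a m n
  rw [(hα m).2, (hα n).2] at h0
  have h1 : C (taylor (-(m : ℂ)) (α n) * α m) * (X * X)
      = C (taylor (-(n : ℂ)) (α m) * α n) * (X * X) := by
    rw [map_mul, map_mul, shift_C, shift_C, shift_X, shift_X] at h0
    rw [C_mul, C_mul]
    linear_combination h0
  exact C_injective (mul_right_cancel₀ (mul_ne_zero X_ne_zero X_ne_zero) h1)

theorem eq_zpow (h : SymbolRelations a b c d) {β : ℤ → ℂ}
    (hβ : ∀ n, β n ≠ 0 ∧ a n = C (C (β n)) * X) (n : ℤ) : β n = β 1 ^ n := by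
  have hshift : ∀ m n : ℤ, shift n (d m) - d m = C (C ((β n)⁻¹ * (β n * β m - β (m + n)))) := by
    intro m n
    have h0 := h.d_a m n
    rw [(hβ n).2, (hβ m).2, (hβ (m + n)).2] at h0
    have h1 : (β n • (shift n (d m) - d m) - C (C (β n * β m - β (m + n)))) * X = 0 := by
      rw [Algebra.smul_def, algebraMap_C_C]
      simp only [map_mul, map_sub, shift_C, shift_X, taylor_C, derivative_mul, derivative_C,
        derivative_X] at h0 ⊢
      linear_combination -h0
    rw [← inv_smul_smul₀ (hβ n).1 (shift n (d m) - d m),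
      sub_eq_zero.mp ((mul_eq_zero.mp h1).resolve_right X_ne_zero), Algebra.smul_def,
      algebraMap_C_C, ← C_mul, ← C_mul]
  refine eq_zpow_of_add_eq_mul_add (fun n => (hβ n).1)
    (s := fun m => -((β 1)⁻¹ * (β 1 * β m - β (m + 1)))) (fun m n => ?_) n
  have h0 := eq_mul_of_shift_sub_self_eq (hshift m) n
  field_simp [(hβ n).1, (hβ 1).1] at h0 ⊢
  linear_combination -h0

theorem exists_c_eq_zpow (h : SymbolRelations a b c d) :
    ∃ lam γ : ℂ, lam ≠ 0 ∧ ∀ n : ℤ, c n = C (C (lam ^ n * γ)) ∧ a n = C (C (lam ^ n)) * X := by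
  obtain ⟨α, hα, hd⟩ := h.exists_a_eq_C_mul_X
  obtain ⟨γ, hc⟩ := h.exists_c_eq hα hd
  have hαC := h.eq_C_of_a_eq_C_mul_X hα
  have hβ : ∀ n, (α n).coeff 0 ≠ 0 ∧ a n = C (C ((α n).coeff 0)) * X := fun n =>
    ⟨fun h0 => (hα n).1 (by rw [hαC n, h0, map_zero]), by rw [(hα n).2, ← hαC n]⟩
  have hpow := h.eq_zpow hβ
  refine ⟨(α 1).coeff 0, γ, (hβ 1).1, fun n => ⟨?_, by rw [(hβ n).2, hpow n]⟩⟩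
  rw [hc n, hαC n, hpow n, ← C_mul]

end SymbolRelations

theorem symbolRelations_of_actsBy {M : Type*} [AddCommGroup M] [Module ℂ M]
    {Φ : ℂ[X][X] →ₗ[ℂ] M} (hΦ : Function.Injective Φ) {Ea Eb Ec Ed : ℤ → Module.End ℂ M}
    {a b c d : ℤ → ℂ[X][X]} (ha : ∀ n : ℤ, ActsBy Φ (Ea n) n (a n) 0)
    (hb : ∀ n : ℤ, ActsBy Φ (Eb n) n (b n) (-c n)) (hc : ∀ n : ℤ, ActsBy Φ (Ec n) n (c n) 0)
    (hd : ∀ n : ℤ, ActsBy Φ (Ed n) n (d n) (a n)) (ha0 : a 0 = X)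
    (hab : ∀ m n : ℤ, Ea m * Eb n - Eb n * Ea m = Ec (m + n))
    (hda : ∀ m n : ℤ, Ed m * Ea n - Ea n * Ed m = Ea (m + n))
    (haa : ∀ m n : ℤ, Ea m * Ea n - Ea n * Ea m = 0)
    (hac : ∀ m n : ℤ, Ea m * Ec n - Ec n * Ea m = 0)
    (hdc : ∀ m n : ℤ, Ed m * Ec n - Ec n * Ed m = 0) :
    SymbolRelations a b c d where
  a_zero := ha0
  d_a m n := by simpa using (hd m).commutator hΦ (ha n) (ha (m + n)).apply_one (hda m n)
  a_a m n := by simpa using (ha m).commutator hΦ (ha n) (t₃ := 0) (by simp) (haa m n)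
  a_c k := by simpa using (ha k).commutator hΦ (hc 0) (t₃ := 0) (by simp) (hac k 0)
  d_c n := by simpa [ha0] using (hd 0).commutator hΦ (hc n) (t₃ := 0) (by simp) (hdc 0 n)
  a_b m := by
    have h := (ha m).commutator hΦ (hb 0) (hc (m + 0)).apply_one (hab m 0)
    simp only [Int.cast_zero, shift_zero, add_zero] at h
    linear_combination h

section Generators

variable {M : Type*} [AddCommGroup M] [Module ℂ M] {EL Ea Eb Ec Ed : ℤ → Module.End ℂ M} {v : M}
  {sym : M → ℂ[X][X]}

theorem actsBy_generators
    (hLL : ∀ m n : ℤ, EL m * EL n - EL n * EL m = ((n - m : ℤ) : ℂ) • EL (m + n))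
    (hLa : ∀ m n : ℤ, EL m * Ea n - Ea n * EL m = (n : ℂ) • Ea (m + n))
    (hLb : ∀ m n : ℤ, EL m * Eb n - Eb n * EL m = (n : ℂ) • Eb (m + n))
    (hLc : ∀ m n : ℤ, EL m * Ec n - Ec n * EL m = (n : ℂ) • Ec (m + n))
    (hLd : ∀ m n : ℤ, EL m * Ed n - Ed n * EL m = (n : ℂ) • Ed (m + n))
    (hab : ∀ m n : ℤ, Ea m * Eb n - Eb n * Ea m = Ec (m + n))
    (hda : ∀ m n : ℤ, Ed m * Ea n - Ea n * Ed m = Ea (m + n))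
    (haa : ∀ m n : ℤ, Ea m * Ea n - Ea n * Ea m = 0)
    (hac : ∀ m n : ℤ, Ea m * Ec n - Ec n * Ea m = 0)
    (hsym : ∀ x, ofSymbol (EL 0) (Ea 0) v (sym x) = x) (n : ℤ) :
    ActsBy (ofSymbol (EL 0) (Ea 0) v) (EL n) n (sym (EL n v)) 0 ∧
    ActsBy (ofSymbol (EL 0) (Ea 0) v) (Ea n) n (sym (Ea n v)) 0 ∧
    ActsBy (ofSymbol (EL 0) (Ea 0) v) (Eb n) n (sym (Eb n v)) (-sym (Ec n v)) ∧
    ActsBy (ofSymbol (EL 0) (Ea 0) v) (Ec n) n (sym (Ec n v)) 0 ∧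
    ActsBy (ofSymbol (EL 0) (Ea 0) v) (Ed n) n (sym (Ed n v)) (sym (Ea n v)) := by
  have hX := ofSymbol_X_mul (v := v) (sub_eq_zero.mp (by simpa using hLa 0 0))
  have hCX := ofSymbol_C_X_mul (L0 := EL 0) (A0 := Ea 0) (v := v)
  have ht (T : Module.End ℂ M) :
      T (ofSymbol (EL 0) (Ea 0) v 1) = ofSymbol (EL 0) (Ea 0) v (sym (T v)) := by
    rw [ofSymbol_one, hsym]
  have hA (n : ℤ) : ActsBy (ofSymbol (EL 0) (Ea 0) v) (Ea n) n (sym (Ea n v)) 0 :=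
    .of_commutator hX hCX .zero (by simpa using hLa 0 n) (haa n 0) (ht _)
  have hC : ActsBy (ofSymbol (EL 0) (Ea 0) v) (Ec n) n (sym (Ec n v)) 0 :=
    .of_commutator hX hCX .zero (by simpa using hLc 0 n) (by rw [← neg_sub, hac, neg_zero]) (ht _)
  exact ⟨.of_commutator hX hCX .zero (by simpa using hLL 0 n) (by simpa using hLa n 0) (ht _),
    hA n,
    .of_commutator hX hCX hC.neg (by simpa using hLb 0 n) (by rw [← neg_sub, hab, zero_add]) (ht _),
    hC,
    .of_commutator hX hCX (hA n) (by simpa using hLd 0 n) (by simpa using hda n 0) (ht _)⟩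

end Generators

theorem Cn_is_scalar_general
    {M : Type*} [AddCommGroup M] [Module ℂ M]
    (EL Ea Eb Ec Ed : ℤ → Module.End ℂ M)
    (hLL : ∀ m n : ℤ, EL m * EL n - EL n * EL m = ((n - m : ℤ) : ℂ) • EL (m + n))
    (hLa : ∀ m n : ℤ, EL m * Ea n - Ea n * EL m = (n : ℂ) • Ea (m + n))
    (hLb : ∀ m n : ℤ, EL m * Eb n - Eb n * EL m = (n : ℂ) • Eb (m + n))
    (hLc : ∀ m n : ℤ, EL m * Ec n - Ec n * EL m = (n : ℂ) • Ec (m + n))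
    (hLd : ∀ m n : ℤ, EL m * Ed n - Ed n * EL m = (n : ℂ) • Ed (m + n))
    (hab : ∀ m n : ℤ, Ea m * Eb n - Eb n * Ea m = Ec (m + n))
    (hda : ∀ m n : ℤ, Ed m * Ea n - Ea n * Ed m = Ea (m + n))
    (haa : ∀ m n : ℤ, Ea m * Ea n - Ea n * Ea m = 0)
    (hac : ∀ m n : ℤ, Ea m * Ec n - Ec n * Ea m = 0)
    (hdc : ∀ m n : ℤ, Ed m * Ec n - Ec n * Ed m = 0)
    (hsimple : ∀ N : Submodule ℂ M,
      (∀ (n : ℤ), ∀ x ∈ N, EL n x ∈ N ∧ Ea n x ∈ N ∧ Eb n x ∈ N ∧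
        Ec n x ∈ N ∧ Ed n x ∈ N) → N = ⊥ ∨ N = ⊤)
    (v : M)
    (hfree : Function.Bijective
      (fun p : MvPolynomial (Fin 2) ℂ => evUB (EL 0) (Ea 0) p v)) :
    (∀ n : ℤ, ∃ c : ℂ,
      Function.invFun (fun p : MvPolynomial (Fin 2) ℂ => evUB (EL 0) (Ea 0) p v) (Ec n v)
        = MvPolynomial.C c) ∧
    (∃ lam : ℂ, lam ≠ 0 ∧ ∀ n : ℤ,
      Function.invFun (fun p : MvPolynomial (Fin 2) ℂ => evUB (EL 0) (Ea 0) p v) (Ec n v)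
        = (lam ^ n : ℂ) •
            Function.invFun (fun p : MvPolynomial (Fin 2) ℂ => evUB (EL 0) (Ea 0) p v)
              (Ec 0 v)) ∧
    Function.invFun (fun p : MvPolynomial (Fin 2) ℂ => evUB (EL 0) (Ea 0) p v) (Ec 0 v)
      ≠ 0 := by
  set Φ := ofSymbol (EL 0) (Ea 0) v
  have hΦ : Function.Bijective Φ := hfree.comp iterEquiv.symm.bijective
  obtain ⟨sym, hΦsym⟩ : ∃ sym : M → ℂ[X][X], ∀ x, Φ (sym x) = x :=
    ⟨_, Function.surjInv_eq hΦ.2⟩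
  choose hL hA hB hC hD using actsBy_generators hLL hLa hLb hLc hLd hab hda haa hac hΦsym
  obtain ⟨lam, γ, hlam, hsymbol⟩ := (symbolRelations_of_actsBy hΦ.1 hA hB hC hD
    (hΦ.1 (by rw [hΦsym, ofSymbol_X])) hab hda haa hac hdc).exists_c_eq_zpow
  have hγ : γ ≠ 0 := by
    rintro rfl
    refine (hsimple _ fun n x hx => ⟨(hL n).mem_multiplesOfX (dvd_zero _) hx,
      (hA n).mem_multiplesOfX (dvd_zero _) hx,
      (hB n).mem_multiplesOfX (by simp [(hsymbol n).1]) hx,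
      (hC n).mem_multiplesOfX (dvd_zero _) hx,
      (hD n).mem_multiplesOfX (by rw [(hsymbol n).2]; exact dvd_mul_left _ _) hx⟩).elim
      (multiplesOfX_ne_bot hΦ.1) (multiplesOfX_ne_top hΦ.1)
  have hinv (n : ℤ) : Function.invFun (fun p : MvPolynomial (Fin 2) ℂ => evUB (EL 0) (Ea 0) p v)
      (Ec n v) = MvPolynomial.C (lam ^ n * γ) := by
    rw [← hΦsym (Ec n v), (hsymbol n).1, ← iterEquiv_C, ofSymbol_iterEquiv]
    exact Function.leftInverse_invFun hfree.1 _
  simp only [hinv]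
  refine ⟨fun n => ⟨_, rfl⟩, ⟨lam, hlam, fun n => ?_⟩, by simpa using hγ⟩
  rw [MvPolynomial.smul_eq_C_mul, ← map_mul, zpow_zero, one_mul, mul_comm]

theorem Cn_is_scalar
    {M : Type*} [AddCommGroup M] [Module ℂ M]
    (EL Ea Eb Ec Ed : ℤ → Module.End ℂ M)
    (hLL : ∀ m n : ℤ, EL m * EL n - EL n * EL m = ((n - m : ℤ) : ℂ) • EL (m + n))
    (hLa : ∀ m n : ℤ, EL m * Ea n - Ea n * EL m = (n : ℂ) • Ea (m + n))
    (hLb : ∀ m n : ℤ, EL m * Eb n - Eb n * EL m = (n : ℂ) • Eb (m + n))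
    (hLc : ∀ m n : ℤ, EL m * Ec n - Ec n * EL m = (n : ℂ) • Ec (m + n))
    (hLd : ∀ m n : ℤ, EL m * Ed n - Ed n * EL m = (n : ℂ) • Ed (m + n))
    (hab : ∀ m n : ℤ, Ea m * Eb n - Eb n * Ea m = Ec (m + n))
    (hda : ∀ m n : ℤ, Ed m * Ea n - Ea n * Ed m = Ea (m + n))
    (hdb : ∀ m n : ℤ, Ed m * Eb n - Eb n * Ed m = -Eb (m + n))
    (haa : ∀ m n : ℤ, Ea m * Ea n - Ea n * Ea m = 0)
    (hac : ∀ m n : ℤ, Ea m * Ec n - Ec n * Ea m = 0)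
    (hbb : ∀ m n : ℤ, Eb m * Eb n - Eb n * Eb m = 0)
    (hbc : ∀ m n : ℤ, Eb m * Ec n - Ec n * Eb m = 0)
    (hcc : ∀ m n : ℤ, Ec m * Ec n - Ec n * Ec m = 0)
    (hdc : ∀ m n : ℤ, Ed m * Ec n - Ec n * Ed m = 0)
    (hdd : ∀ m n : ℤ, Ed m * Ed n - Ed n * Ed m = 0)
    (hsimple : ∀ N : Submodule ℂ M,
      (∀ (n : ℤ), ∀ x ∈ N, EL n x ∈ N ∧ Ea n x ∈ N ∧ Eb n x ∈ N ∧
        Ec n x ∈ N ∧ Ed n x ∈ N) → N = ⊥ ∨ N = ⊤)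
    [Nontrivial M]
    (v : M)
    (hfree : Function.Bijective
      (fun p : MvPolynomial (Fin 2) ℂ => evUB (EL 0) (Ea 0) p v)) :
    (∀ n : ℤ, ∃ c : ℂ,
      Function.invFun (fun p : MvPolynomial (Fin 2) ℂ => evUB (EL 0) (Ea 0) p v) (Ec n v)
        = MvPolynomial.C c) ∧
    (∃ lam : ℂ, lam ≠ 0 ∧ ∀ n : ℤ,
      Function.invFun (fun p : MvPolynomial (Fin 2) ℂ => evUB (EL 0) (Ea 0) p v) (Ec n v)
        = (lam ^ n : ℂ) •
            Function.invFun (fun p : MvPolynomial (Fin 2) ℂ => evUB (EL 0) (Ea 0) p v)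
              (Ec 0 v)) ∧
    Function.invFun (fun p : MvPolynomial (Fin 2) ℂ => evUB (EL 0) (Ea 0) p v) (Ec 0 v)
      ≠ 0 :=
  Cn_is_scalar_general EL Ea Eb Ec Ed hLL hLa hLb hLc hLd hab hda haa hac hdc hsimple v hfree

end
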